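/- Let n, d ≥ 1 and let ℓ_1,…,ℓ_n : ℝᵈ → ℝ be differentiable with differentiable gradient maps g_i = ∇ℓ_i. Define G(w,θ) = ∑_{i=1}^n w_i g_i(θ), let θ* : ℝⁿ → ℝᵈ be differentiable at w₀ with θ₀ = θ*(w₀), suppose G(w, θ*(w)) = 0 for all w, and suppose H = ∑_{i=1}^n (w₀)_i Dg_i(θ₀) : ℝᵈ → ℝᵈ is invertible. Let R : ℝᵈ → ℝ be differentiable at θ₀ (the target-set risk). Then for each i ∈ {1,…,n}, the directional derivative of w ↦ R(θ*(w)) at w₀ along the i-th coordinate direction equals −⟨∇R(θ₀), H⁻¹ ∇ℓ_i(θ₀)⟩. -/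

import Mathlib

/-!
Differentiating the stationarity condition `∑ⱼ wⱼ gⱼ(θ*(w)) = 0` at `w₀` in the direction `eᵢ`
gives `H (Dθ*(w₀) eᵢ) + gᵢ(θ₀) = 0`, so `Dθ*(w₀) eᵢ = -H⁻¹ gᵢ(θ₀)`; the chain rule for
`R ∘ θ*` then pairs this with `∇R(θ₀)`.
-/

open RealInnerProductSpace

section

variable {ι F : Type*} [Fintype ι] [NormedAddCommGroup F] [NormedSpace ℝ F]

theorem HasFDerivAt.sum_coord_smul {f : ι → (ι → ℝ) → F} {f' : ι → (ι → ℝ) →L[ℝ] F}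
    {w₀ : ι → ℝ} (hf : ∀ j, HasFDerivAt (f j) (f' j) w₀) :
    HasFDerivAt (fun w => ∑ j, w j • f j w)
      (∑ j, (w₀ j • f' j + (ContinuousLinearMap.proj j).smulRight (f j w₀))) w₀ :=
  HasFDerivAt.fun_sum fun j _ =>
    ((ContinuousLinearMap.proj j : (ι → ℝ) →L[ℝ] ℝ).hasFDerivAt.smul (hf j))

theorem fderiv_apply_single_eq_neg_symm_of_sum_smul_eq_zero [DecidableEq ι]
    {g : ι → F → F} {θstar : (ι → ℝ) → F} {w₀ : ι → ℝ}
    (hg : ∀ j, DifferentiableAt ℝ (g j) (θstar w₀)) (hθ : DifferentiableAt ℝ θstar w₀)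
    (hopt : ∀ᶠ w in nhds w₀, ∑ j, w j • g j (θstar w) = 0) {H : F ≃L[ℝ] F}
    (hH : (H : F →L[ℝ] F) = ∑ j, w₀ j • fderiv ℝ (g j) (θstar w₀)) (i : ι) :
    fderiv ℝ θstar w₀ (Pi.single i 1) = -H.symm (g i (θstar w₀)) := by
  set v := fderiv ℝ θstar w₀ (Pi.single i 1)
  have hderiv := HasFDerivAt.sum_coord_smul fun j => (hg j).hasFDerivAt.comp w₀ hθ.hasFDerivAt
  have hzero := hderiv.unique ((hasFDerivAt_const 0 w₀).congr_of_eventuallyEq hopt)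
  have hHv : H v + g i (θstar w₀) = 0 := by
    have hHapply : H v = ∑ j, w₀ j • fderiv ℝ (g j) (θstar w₀) v := by
      simp [← ContinuousLinearEquiv.coe_coe, hH]
    have hdir := congrArg (fun L : (ι → ℝ) →L[ℝ] F => L (Pi.single i 1)) hzero
    simpa [Finset.sum_add_distrib, Pi.single_apply, hHapply] using hdir
  rw [eq_neg_iff_add_eq_zero, ← H.symm_apply_apply v, ← map_add, hHv, map_zero]

end

theorem fderiv_comp_apply_eq_inner_gradient {E F : Type*} [NormedAddCommGroup E]
    [NormedSpace ℝ E] [NormedAddCommGroup F] [InnerProductSpace ℝ F] [CompleteSpace F]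
    {R : F → ℝ} {θ : E → F} {w₀ : E} (hR : DifferentiableAt ℝ R (θ w₀))
    (hθ : DifferentiableAt ℝ θ w₀) (v : E) :
    fderiv ℝ (fun w => R (θ w)) w₀ v = ⟪gradient R (θ w₀), fderiv ℝ θ w₀ v⟫ := by
  rw [fderiv_fun_comp w₀ hR hθ, ContinuousLinearMap.comp_apply,
    hR.hasGradientAt.hasFDerivAt.fderiv, InnerProductSpace.toDual_apply_apply]

theorem influence_function_risk_derivative_general (n d : ℕ)
    (g : Fin n → EuclideanSpace ℝ (Fin d) → EuclideanSpace ℝ (Fin d))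
    (hgdiff : ∀ i, Differentiable ℝ (g i))
    (θstar : (Fin n → ℝ) → EuclideanSpace ℝ (Fin d)) (w₀ : Fin n → ℝ)
    (hθdiff : DifferentiableAt ℝ θstar w₀)
    (hopt : ∀ w : Fin n → ℝ, ∑ i, w i • g i (θstar w) = 0)
    (H : EuclideanSpace ℝ (Fin d) ≃L[ℝ] EuclideanSpace ℝ (Fin d))
    (hH : (H : EuclideanSpace ℝ (Fin d) →L[ℝ] EuclideanSpace ℝ (Fin d))
      = ∑ i, w₀ i • fderiv ℝ (g i) (θstar w₀))
    (R : EuclideanSpace ℝ (Fin d) → ℝ)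
    (hR : DifferentiableAt ℝ R (θstar w₀)) :
    ∀ i : Fin n,
      fderiv ℝ (fun w => R (θstar w)) w₀ (Pi.single i 1)
        = -⟪gradient R (θstar w₀), H.symm (g i (θstar w₀))⟫ := by
  intro i
  rw [fderiv_comp_apply_eq_inner_gradient hR hθdiff,
    fderiv_apply_single_eq_neg_symm_of_sum_smul_eq_zero (fun j => hgdiff j _) hθdiff
      (Filter.Eventually.of_forall hopt) hH i, inner_neg_right]

/-- Influence-function formula for the target risk:
`d R(θ*(w))/d w_i = −⟨∇R(θ₀), H⁻¹ ∇ℓ_i(θ₀)⟩` at `w₀`, where `θ₀ = θ*(w₀)`, each loss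
`ℓ_i` has differentiable gradient map `g_i`, `∑_i w_i g_i(θ*(w)) = 0` for all `w`, `θ*`
is differentiable at `w₀`, the Hessian `H = ∑_i (w₀)_i Dg_i(θ₀)` is invertible, and the
target risk `R` is differentiable at `θ₀`. -/
theorem influence_function_risk_derivative (n d : ℕ) (hn : 1 ≤ n) (hd : 1 ≤ d)
    (ℓ : Fin n → EuclideanSpace ℝ (Fin d) → ℝ)
    (g : Fin n → EuclideanSpace ℝ (Fin d) → EuclideanSpace ℝ (Fin d))
    (hgrad : ∀ i θ, HasGradientAt (ℓ i) (g i θ) θ)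
    (hgdiff : ∀ i, Differentiable ℝ (g i))
    (θstar : (Fin n → ℝ) → EuclideanSpace ℝ (Fin d)) (w₀ : Fin n → ℝ)
    (hθdiff : DifferentiableAt ℝ θstar w₀)
    (hopt : ∀ w : Fin n → ℝ, ∑ i, w i • g i (θstar w) = 0)
    (H : EuclideanSpace ℝ (Fin d) ≃L[ℝ] EuclideanSpace ℝ (Fin d))
    (hH : (H : EuclideanSpace ℝ (Fin d) →L[ℝ] EuclideanSpace ℝ (Fin d))
      = ∑ i, w₀ i • fderiv ℝ (g i) (θstar w₀))
    (R : EuclideanSpace ℝ (Fin d) → ℝ)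
    (hR : DifferentiableAt ℝ R (θstar w₀)) :
    ∀ i : Fin n,
      fderiv ℝ (fun w => R (θstar w)) w₀ (Pi.single i 1)
        = -⟪gradient R (θstar w₀), H.symm (g i (θstar w₀))⟫ :=
  influence_function_risk_derivative_general n d g hgdiff θstar w₀ hθdiff hopt H hH R hR
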